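/- arXiv:0809.0636 — 3 statements merged into one kernel-verified Lean document; each statement's English description precedes it below -/
import Mathlib

section
/- Let α > 0 and a¹, a², a³ be real numbers, and set vᴵ = √(α² + (aᴵ)²) for I = 1,2,3. Suppose 1/v¹ + 1/v² = 1/v³ and a¹/v¹ + a²/v² = a³/v³, and a² > a¹. Then 1/v¹ = (1/v³)(1/2 + √3·a³/(2α)) and 1/v² = (1/v³)(1/2 − √3·a³/(2α)). -/
/-!
The vectors `pᴵ = (α, aᴵ) / vᴵ` are unit vectors, and the two hypotheses say `p¹ + p² = p³`.
Three unit vectors with `p¹ + p² = p³` put `p¹` and `p²` at angles `±π/3` from `p³`, so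
`p¹ - p²` is orthogonal to `p³` and of length `√3`; the orientation `a¹ < a²` fixes the sign,
giving `p¹ - p² = √3 · (a³, -α) / v³`. Adding `p¹ + p² = p³` and reading off the first
coordinate gives the two formulas.
-/

open Real

section UnitVectors

variable {x₁ y₁ x₂ y₂ x₃ y₃ : ℝ}

theorem dot_sub_eq_zero_of_add_eq
    (h₁ : x₁ ^ 2 + y₁ ^ 2 = 1) (h₂ : x₂ ^ 2 + y₂ ^ 2 = 1)
    (hx : x₁ + x₂ = x₃) (hy : y₁ + y₂ = y₃) :
    x₃ * (x₁ - x₂) + y₃ * (y₁ - y₂) = 0 := by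
  linear_combination h₁ - h₂ - (x₁ - x₂) * hx - (y₁ - y₂) * hy

theorem cross_sub_sq_eq_three_of_add_eq
    (h₁ : x₁ ^ 2 + y₁ ^ 2 = 1) (h₂ : x₂ ^ 2 + y₂ ^ 2 = 1) (h₃ : x₃ ^ 2 + y₃ ^ 2 = 1)
    (hx : x₁ + x₂ = x₃) (hy : y₁ + y₂ = y₃) :
    (x₃ * (y₁ - y₂) - y₃ * (x₁ - x₂)) ^ 2 = 3 := by
  -- Lagrange's identity `cross² + dot² = |p₃|² |p₁ - p₂|²`, with `|p₁ - p₂|² = 3`.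
  linear_combination
    (-(x₃ * (x₁ - x₂) + y₃ * (y₁ - y₂))) * dot_sub_eq_zero_of_add_eq h₁ h₂ hx hy
    + ((x₁ - x₂) ^ 2 + (y₁ - y₂) ^ 2) * h₃
    + 2 * h₁ + 2 * h₂ - h₃ - (x₁ + x₂ + x₃) * hx - (y₁ + y₂ + y₃) * hy

theorem sub_eq_sqrt_three_mul_of_add_eq
    (h₁ : x₁ ^ 2 + y₁ ^ 2 = 1) (h₂ : x₂ ^ 2 + y₂ ^ 2 = 1) (h₃ : x₃ ^ 2 + y₃ ^ 2 = 1)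
    (hx : x₁ + x₂ = x₃) (hy : y₁ + y₂ = y₃) (hcross : 0 < x₁ * y₂ - x₂ * y₁) :
    x₁ - x₂ = √3 * y₃ := by
  have hneg : x₃ * (y₁ - y₂) - y₃ * (x₁ - x₂) < 0 := by
    have : x₃ * (y₁ - y₂) - y₃ * (x₁ - x₂) = -2 * (x₁ * y₂ - x₂ * y₁) := by
      rw [← hx, ← hy]; ring
    linarith
  have hcross₃ : x₃ * (y₁ - y₂) - y₃ * (x₁ - x₂) = -√3 := by
    rw [← cross_sub_sq_eq_three_of_add_eq h₁ h₂ h₃ hx hy, sqrt_sq_eq_abs, abs_of_neg hneg,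
      neg_neg]
  linear_combination (-(x₁ - x₂)) * h₃ + x₃ * dot_sub_eq_zero_of_add_eq h₁ h₂ hx hy
    - y₃ * hcross₃

end UnitVectors

theorem div_sqrt_sq_add_div_sqrt_sq {α a : ℝ} (hα : α ≠ 0) :
    (α / √(α ^ 2 + a ^ 2)) ^ 2 + (a / √(α ^ 2 + a ^ 2)) ^ 2 = 1 := by
  rw [div_pow, div_pow, sq_sqrt (by positivity), ← add_div, div_self (by positivity)]

theorem lemma12_first_half (α a1 a2 a3 v1 v2 v3 : ℝ) (hα : 0 < α)
    (hv1 : v1 = Real.sqrt (α ^ 2 + a1 ^ 2))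
    (hv2 : v2 = Real.sqrt (α ^ 2 + a2 ^ 2))
    (hv3 : v3 = Real.sqrt (α ^ 2 + a3 ^ 2))
    (hrel1 : 1 / v1 + 1 / v2 = 1 / v3)
    (hrel2 : a1 / v1 + a2 / v2 = a3 / v3)
    (hord : a1 < a2) :
    1 / v1 = (1 / v3) * (1 / 2 + Real.sqrt 3 * a3 / (2 * α)) ∧
    1 / v2 = (1 / v3) * (1 / 2 - Real.sqrt 3 * a3 / (2 * α)) := by
  have hv1_pos : 0 < v1 := hv1 ▸ sqrt_pos.2 (by positivity)
  have hv2_pos : 0 < v2 := hv2 ▸ sqrt_pos.2 (by positivity)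
  have hv3_pos : 0 < v3 := hv3 ▸ sqrt_pos.2 (by positivity)
  have hx : α / v1 + α / v2 = α / v3 := by
    rw [div_eq_mul_one_div α v3, ← hrel1]; ring
  have hcross : 0 < α / v1 * (a2 / v2) - α / v2 * (a1 / v1) := by
    rw [show α / v1 * (a2 / v2) - α / v2 * (a1 / v1) = α * (a2 - a1) / (v1 * v2) by ring]
    have := sub_pos.2 hord
    positivity
  have hd := sub_eq_sqrt_three_mul_of_add_eq
    (by rw [hv1]; exact div_sqrt_sq_add_div_sqrt_sq hα.ne')
    (by rw [hv2]; exact div_sqrt_sq_add_div_sqrt_sq hα.ne')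
    (by rw [hv3]; exact div_sqrt_sq_add_div_sqrt_sq hα.ne') hx hrel2 hcross
  constructor
  · calc 1 / v1 = (α / v1) / α := by field_simp
      _ = (α / v3 + √3 * (a3 / v3)) / 2 / α := by rw [← hx, ← hd]; ring
      _ = _ := by field_simp
  · calc 1 / v2 = (α / v2) / α := by field_simp
      _ = (α / v3 - √3 * (a3 / v3)) / 2 / α := by rw [← hx, ← hd]; ring
      _ = _ := by field_simp
end

section
/- Let α > 0 and a¹, a², a³ be real numbers, set vᴵ = √(α² + (aᴵ)²). Suppose 1/v¹ + 1/v² = 1/v³ and a¹/v¹ + a²/v² = a³/v³, and a² > a¹. Then a¹/v¹ = a³/(2v³) − √3·α/(2v³) and a²/v² = a³/(2v³) + √3·α/(2v³). -/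
/-! The vectors `uᵢ = (aᵢ, α) / vᵢ` are unit vectors with `u₁ + u₂ = u₃`, so they form an
equilateral configuration: `u₂ - u₁` is orthogonal to `u₃` and has length `√3`. Its first
coordinate is therefore `± √3 α / v₃`, and `a₁ < a₂` (equivalently `a₁ / v₁ < a₂ / v₂`) fixes
the sign. Adding and subtracting `a₁ / v₁ + a₂ / v₂ = a₃ / v₃` gives the two formulas. -/

open Real

lemma div_sqrt_sq_add_sq_eq_sin_arctan {α : ℝ} (hα : 0 < α) (a : ℝ) :
    a / √(α ^ 2 + a ^ 2) = sin (arctan (a / α)) := by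
  have h : √(1 + (a / α) ^ 2) = √(α ^ 2 + a ^ 2) / α := by
    rw [div_pow, one_add_div (by positivity), sqrt_div' _ (sq_nonneg α), sqrt_sq hα.le]
  rw [sin_arctan, h, div_div_div_cancel_right₀ hα.ne']

lemma strictMono_div_sqrt_sq_add_sq {α : ℝ} (hα : 0 < α) :
    StrictMono fun a : ℝ => a / √(α ^ 2 + a ^ 2) := by
  intro a b hab
  simp only [div_sqrt_sq_add_sq_eq_sin_arctan hα]
  exact sin_arctan_strictMono (div_lt_div_of_pos_right hab hα)

lemma div_sqrt_sq_add_sq_sq_add_sq (α a : ℝ) (hα : α ≠ 0) :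
    (a / √(α ^ 2 + a ^ 2)) ^ 2 + (α / √(α ^ 2 + a ^ 2)) ^ 2 = 1 := by
  have hpos : 0 < α ^ 2 + a ^ 2 := by positivity
  rw [div_pow, div_pow, sq_sqrt hpos.le, ← add_div, add_comm, div_self hpos.ne']

lemma sub_eq_sqrt_three_mul_abs_of_sq_add_sq_eq_one {x₁ y₁ x₂ y₂ : ℝ}
    (h₁ : x₁ ^ 2 + y₁ ^ 2 = 1) (h₂ : x₂ ^ 2 + y₂ ^ 2 = 1)
    (h₁₂ : (x₁ + x₂) ^ 2 + (y₁ + y₂) ^ 2 = 1) (hx : x₁ < x₂) :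
    x₂ - x₁ = √3 * |y₁ + y₂| := by
  have hdiff : (x₂ - x₁) * (x₁ + x₂) = (y₁ - y₂) * (y₁ + y₂) := by
    linear_combination h₂ - h₁
  -- With `uᵢ = (xᵢ, yᵢ)`: `u₂ - u₁ ⊥ u₁ + u₂` (this is `hdiff`) and `|u₂ - u₁|² = 3`, so
  -- `u₂ - u₁` is `± √3` times `u₁ + u₂` rotated by a right angle.
  have hsq : (x₂ - x₁) ^ 2 = 3 * (y₁ + y₂) ^ 2 := by
    linear_combination ((x₂ - x₁) * (x₁ + x₂) + (y₁ - y₂) * (y₁ + y₂)) * hdiff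
      + (y₁ + y₂) ^ 2 * (2 * h₁ + 2 * h₂ - h₁₂) - (x₂ - x₁) ^ 2 * h₁₂
  rw [← sqrt_sq (sub_nonneg.2 hx.le), hsq, sqrt_mul (by norm_num), sqrt_sq_eq_abs]

theorem lemma12_second_half (α a1 a2 a3 v1 v2 v3 : ℝ) (hα : 0 < α)
    (hv1 : v1 = Real.sqrt (α ^ 2 + a1 ^ 2))
    (hv2 : v2 = Real.sqrt (α ^ 2 + a2 ^ 2))
    (hv3 : v3 = Real.sqrt (α ^ 2 + a3 ^ 2))
    (hrel1 : 1 / v1 + 1 / v2 = 1 / v3)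
    (hrel2 : a1 / v1 + a2 / v2 = a3 / v3)
    (hord : a1 < a2) :
    a1 / v1 = a3 / (2 * v3) - Real.sqrt 3 * α / (2 * v3) ∧
    a2 / v2 = a3 / (2 * v3) + Real.sqrt 3 * α / (2 * v3) := by
  have hrelα : α / v1 + α / v2 = α / v3 := by linear_combination α * hrel1
  have h₃ : (a1 / v1 + a2 / v2) ^ 2 + (α / v1 + α / v2) ^ 2 = 1 := by
    rw [hrel2, hrelα, hv3]
    exact div_sqrt_sq_add_sq_sq_add_sq α a3 hα.ne'
  subst hv1 hv2
  have hdiff := sub_eq_sqrt_three_mul_abs_of_sq_add_sq_eq_one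
    (div_sqrt_sq_add_sq_sq_add_sq α a1 hα.ne') (div_sqrt_sq_add_sq_sq_add_sq α a2 hα.ne') h₃
    (strictMono_div_sqrt_sq_add_sq hα hord)
  rw [hrelα, abs_of_pos (by rw [hv3]; positivity)] at hdiff
  constructor
  · linear_combination (hrel2 - hdiff) / 2
  · linear_combination (hrel2 + hdiff) / 2
end

section
/- Let b ∈ ℝ² and a₁, a₂, a₃ ∈ ℝ² with a₁ + a₂ + a₃ = 0, all a_I of common length |a|, and a₁ = R_{4π/3}a₃, a₂ = R_{2π/3}a₃. Set r_I = a_I + i b ∈ ℂ² with the bilinear dot product. Then (√3/2)(r₁⋄r₃ + r₂⋄r₃ + r₁⋄r₂) + (1/2)(r₁⋄r₂^⊥ + r₂⋄r₃^⊥ + r₃⋄r₁^⊥) = −(3√3/2)|b|². -/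
noncomputable section

/-- Euclidean length of a vector in `ℝ²`. -/
def len2 (a : ℝ × ℝ) : ℝ := Real.sqrt (a.1 ^ 2 + a.2 ^ 2)

/-- Counterclockwise rotation of `ℝ²` by angle `θ`. -/
def rot2 (θ : ℝ) (a : ℝ × ℝ) : ℝ × ℝ :=
  (Real.cos θ * a.1 - Real.sin θ * a.2, Real.sin θ * a.1 + Real.cos θ * a.2)

/-- Bilinear (not Hermitian) extension of the real dot product to `ℂ²`. -/
def cdot (z w : ℂ × ℂ) : ℂ := z.1 * w.1 + z.2 * w.2

/-- Complex-linear extension of the counterclockwise `π/2` rotation to `ℂ²`. -/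
def cperp (z : ℂ × ℂ) : ℂ × ℂ := (-z.2, z.1)

/-- The complex vector `a + i b` in `ℂ²`, for `a, b ∈ ℝ²`. -/
def cvec (a b : ℝ × ℝ) : ℂ × ℂ :=
  ((a.1 : ℂ) + Complex.I * (b.1 : ℂ), (a.2 : ℂ) + Complex.I * (b.2 : ℂ))

theorem det_value (a1 a2 a3 b : ℝ × ℝ) (ℓ : ℝ)
    (h1 : len2 a1 = ℓ) (h2 : len2 a2 = ℓ) (h3 : len2 a3 = ℓ)
    (hsum : a1 + a2 + a3 = 0)
    (hrot1 : a1 = rot2 (4 * Real.pi / 3) a3)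
    (hrot2 : a2 = rot2 (2 * Real.pi / 3) a3) :
    (Real.sqrt 3 / 2 : ℂ) *
        (cdot (cvec a1 b) (cvec a3 b) + cdot (cvec a2 b) (cvec a3 b) +
          cdot (cvec a1 b) (cvec a2 b)) +
      (1 / 2 : ℂ) *
        (cdot (cvec a1 b) (cperp (cvec a2 b)) +
         cdot (cvec a2 b) (cperp (cvec a3 b)) +
         cdot (cvec a3 b) (cperp (cvec a1 b)))
    = ((-(3 * Real.sqrt 3 / 2) * (len2 b) ^ 2 : ℝ) : ℂ) := by
  have hc1 : Real.cos (4 * Real.pi / 3) = -(1/2) := by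
    rw [show (4 * Real.pi / 3) = Real.pi + Real.pi/3 by ring]
    simp [Real.cos_add, Real.cos_pi_div_three]
  have hs1 : Real.sin (4 * Real.pi / 3) = -(Real.sqrt 3 / 2) := by
    rw [show (4 * Real.pi / 3) = Real.pi + Real.pi/3 by ring]
    simp [Real.sin_add, Real.sin_pi_div_three]
  have hc2 : Real.cos (2 * Real.pi / 3) = -(1/2) := by
    rw [show (2 * Real.pi / 3) = Real.pi - Real.pi/3 by ring, Real.cos_pi_sub,
      Real.cos_pi_div_three]
  have hs2 : Real.sin (2 * Real.pi / 3) = Real.sqrt 3 / 2 := by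
    rw [show (2 * Real.pi / 3) = Real.pi - Real.pi/3 by ring, Real.sin_pi_sub,
      Real.sin_pi_div_three]
  have hb : (len2 b) ^ 2 = b.1 ^ 2 + b.2 ^ 2 := Real.sq_sqrt (by positivity)
  have hs : Real.sqrt 3 ^ 2 = 3 := Real.sq_sqrt (by norm_num)
  subst hrot1 hrot2
  simp only [rot2, cvec, cdot, cperp, hc1, hs1, hc2, hs2]
  rw [Complex.ext_iff]
  push_cast [hb]
  constructor <;> simp [Complex.ext_iff, ← Complex.ofReal_pow] <;> ring_nf <;>
    linear_combination (-(Real.sqrt 3) * (a3.1 ^ 2 + a3.2 ^ 2) / 8) * hs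
end
end
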